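/- In the Hochschild lattice of size n ≥ 1, there are exactly 2n − 1 join-irreducible elements; they are precisely the triwords of the form 1^a 0^b with a ≥ 1 and the triwords of the form 0^a 2 0^b with a ≥ 1. -/

import Mathlib

def IsTriword {n : ℕ} (u : Fin n → Fin 3) : Prop :=
  (∀ i : Fin n, (i : ℕ) = 0 → u i ≠ 2) ∧
  ∀ i j : Fin n, i < j → u i = 0 → u j ≠ 1

abbrev Triword (n : ℕ) := {u : Fin n → Fin 3 // IsTriword u}

namespace HLaux

variable {n : ℕ}

/-- the word `1^a 0^(n-a)` -/
def W1 (n a : ℕ) : Fin n → Fin 3 := fun i => if (i : ℕ) < a then 1 else 0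

/-- the word `0^a 2 0^(n-a-1)` -/
def W2 (n a : ℕ) : Fin n → Fin 3 := fun i => if (i : ℕ) = a then 2 else 0

lemma W1_tri (a : ℕ) : IsTriword (W1 n a) := by
  constructor
  · intro i _; unfold W1; split <;> decide
  · intro i j hij h0 h1
    have hij' : (i : ℕ) < (j : ℕ) := hij
    unfold W1 at h0 h1
    split_ifs at h0 h1 with h h'
    · exact absurd h0 (by decide)
    · exact absurd h0 (by decide)
    · omega
    · exact absurd h1 (by decide)

lemma W2_tri (a : ℕ) (ha : 1 ≤ a) : IsTriword (W2 n a) := by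
  constructor
  · intro i hi; unfold W2; split_ifs with h
    · omega
    · decide
  · intro i j _ _ h1
    unfold W2 at h1
    split_ifs at h1 <;> exact absurd h1 (by decide)

lemma bot_tri : IsTriword (fun _ : Fin n => (0 : Fin 3)) :=
  ⟨fun _ _ => show (0 : Fin 3) ≠ 2 by decide,
   fun _ _ _ _ => show (0 : Fin 3) ≠ 1 by decide⟩

lemma le_def' (u v : Triword n) : u ≤ v ↔ ∀ i, u.1 i ≤ v.1 i := Iff.rfl

lemma unique_cover_of (u c : Triword n) (hcu : c < u) (H : ∀ v, v < u → v ≤ c) :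
    ∃! v : Triword n, v ⋖ u := by
  refine ⟨c, ⟨hcu, fun w hcw hwu => (LT.lt.not_ge hcw (H w hwu))⟩, fun v hv => ?_⟩
  rcases (H v hv.1).lt_or_eq with h | h
  · exact absurd hcu (hv.2 h)
  · exact h

lemma below_le (u c : Triword n) (huniq : ∀ v : Triword n, v ⋖ u → v = c)
    {v : Triword n} (hv : v < u) : v ≤ c := by
  obtain ⟨w, hw, hmax⟩ := Set.Finite.exists_maximalFor id
    {w : Triword n | v ≤ w ∧ w < u} (Set.toFinite _) ⟨v, le_refl v, hv⟩
  have hcov : w ⋖ u :=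
    ⟨hw.2, fun x hwx hxu => LT.lt.not_ge hwx (hmax (j := x) ⟨hw.1.trans hwx.le, hxu⟩ hwx.le)⟩
  exact huniq w hcov ▸ hw.1

lemma fin3_le1 : ∀ x : Fin 3, x ≤ 1 → x ≠ 1 → x = 0 := by decide
lemma fin3_le0 : ∀ x : Fin 3, x ≤ 0 → x = 0 := by decide
lemma fin3_ne0 : ∀ x : Fin 3, x ≠ 0 → (1 : Fin 3) ≤ x := by decide
lemma fin3_cases : ∀ x : Fin 3, x = 0 ∨ x = 1 ∨ x = 2 := by decide

/-- Characterization of join-irreducibles. -/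
lemma char (hn : 1 ≤ n) (u : Triword n) : (∃! v : Triword n, v ⋖ u) ↔
    ((∃ a : ℕ, 1 ≤ a ∧ a ≤ n ∧
        ∀ i : Fin n, u.1 i = if (i : ℕ) < a then 1 else 0) ∨
     (∃ a : ℕ, 1 ≤ a ∧ a < n ∧
        ∀ i : Fin n, u.1 i = if (i : ℕ) = a then 2 else 0)) := by
  constructor
  · rintro ⟨c, hc, huniq⟩
    by_contra hforms
    push_neg at hforms
    obtain ⟨hF1, hF2⟩ := hforms
    -- we show u ≤ c, contradicting c < u
    have key : ∀ i, u.1 i ≤ c.1 i := by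
      intro i
      rcases fin3_cases (u.1 i) with h0 | h1 | h2
      · rw [h0]; exact Fin.zero_le _
      · -- find a maximal index carrying a 1
        obtain ⟨m, hm, hmax⟩ := Set.Finite.exists_maximalFor id
          {j : Fin n | u.1 j = 1} (Set.toFinite _) ⟨i, h1⟩
        have hmax' : ∀ j, u.1 j = 1 → j ≤ m := by
          intro j hj
          rcases le_total j m with h | h
          · exact h
          · exact hmax hj h
        -- the word 1^(m+1) 0^*
        have hple : ∀ j : Fin n, W1 n ((m : ℕ) + 1) j ≤ u.1 j := by
          intro j
          unfold W1
          split_ifs with hj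
          · -- j ≤ m, so u j ≠ 0
            apply fin3_ne0
            intro hj0
            have hm1 : u.1 m = 1 := hm
            rcases eq_or_lt_of_le (Nat.lt_succ_iff.mp hj) with he | hlt
            · rw [show j = m from Fin.ext he] at hj0; rw [hj0] at hm1
              exact absurd hm1 (by decide)
            · exact u.2.2 j m hlt hj0 hm1
          · exact Fin.zero_le _
        set p : Triword n := ⟨W1 n ((m : ℕ) + 1), W1_tri _⟩ with hp
        have hpu : p ≤ u := hple
        have hpne : p ≠ u := by
          intro he
          obtain ⟨j, hjne⟩ := hF1 ((m : ℕ) + 1) (by omega)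
            (by have := m.isLt; omega)
          exact hjne (by rw [← he]; rfl)
        have hpc : p ≤ c := below_le u c huniq (lt_of_le_of_ne hpu hpne)
        have : p.1 i = 1 := by
          show W1 n ((m : ℕ) + 1) i = 1
          unfold W1
          have : (i : ℕ) < (m : ℕ) + 1 := Nat.lt_succ_of_le (hmax' i h1)
          simp [this]
        calc u.1 i = p.1 i := by rw [h1, this]
          _ ≤ c.1 i := hpc i
      · -- u i = 2; use the word 0^i 2 0^*
        have hi1 : 1 ≤ (i : ℕ) := by
          rcases Nat.eq_zero_or_pos (i : ℕ) with h | h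
          · exact absurd h2 (u.2.1 i h)
          · exact h
        have hqle : ∀ j : Fin n, W2 n (i : ℕ) j ≤ u.1 j := by
          intro j
          unfold W2
          split_ifs with hj
          · rw [show j = i from Fin.ext hj, h2]
          · exact Fin.zero_le _
        set q : Triword n := ⟨W2 n (i : ℕ), W2_tri _ hi1⟩ with hq
        have hqne : q ≠ u := by
          intro he
          obtain ⟨j, hjne⟩ := hF2 (i : ℕ) hi1 i.isLt
          exact hjne (by rw [← he]; rfl)
        have hqc : q ≤ c := below_le u c huniq (lt_of_le_of_ne hqle hqne)
        have : q.1 i = 2 := by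
          show W2 n (i : ℕ) i = 2
          unfold W2; simp
        calc u.1 i = q.1 i := by rw [h2, this]
          _ ≤ c.1 i := hqc i
    exact absurd key (LT.lt.not_ge hc.1)
  · rintro (⟨a, ha1, han, hu⟩ | ⟨a, ha1, han, hu⟩)
    · -- u = 1^a 0^*, cover is 1^(a-1) 0^*
      set c : Triword n := ⟨W1 n (a - 1), W1_tri _⟩ with hcdef
      have hcu : c < u := by
        refine lt_of_le_of_ne ?_ ?_
        · intro j
          show W1 n (a-1) j ≤ u.1 j
          rw [hu j]; unfold W1
          split_ifs with h h'
          · exact le_refl _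
          · omega
          · exact Fin.zero_le _
          · exact le_refl _
        · intro he
          have := congrFun (congrArg Subtype.val he) ⟨a - 1, by omega⟩
          rw [hu ⟨a - 1, by omega⟩] at this
          simp only [hcdef, W1] at this
          rw [if_neg (by omega), if_pos (by omega)] at this
          exact absurd this (by decide)
      refine unique_cover_of u c hcu ?_
      intro v hv
      have hle : ∀ j, v.1 j ≤ u.1 j := hv.le
      -- find an index where v is strictly below u; it has v = 0, u = 1
      have hne : v.1 ≠ u.1 := fun h => hv.ne (Subtype.ext h)
      obtain ⟨k, hk⟩ := Function.ne_iff.mp hne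
      have hk' : (k : ℕ) < a ∧ v.1 k = 0 := by
        have h1 := hle k
        rw [hu k] at h1 hk
        split_ifs at h1 hk with h
        · exact ⟨h, fin3_le1 _ h1 hk⟩
        · exact absurd (fin3_le0 _ h1) hk
      intro j
      show v.1 j ≤ W1 n (a-1) j
      unfold W1
      split_ifs with h
      · have := hle j
        rw [hu j, if_pos (by omega)] at this
        exact this
      · -- need v j = 0
        have hja : a - 1 ≤ (j : ℕ) := by omega
        rcases fin3_cases (v.1 j) with h0 | h1 | h2
        · rw [h0]
        · -- v j = 1 : contradiction with triword or with k
          exfalso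
          have hja' : (j : ℕ) < a := by
            by_contra hc'
            have := hle j
            rw [hu j, if_neg (by omega)] at this
            rw [fin3_le0 _ this] at h1
            exact absurd h1 (by decide)
          have hjk : (j : ℕ) = a - 1 := by omega
          rcases Nat.lt_or_ge (k : ℕ) (a - 1) with hlt | hge
          · exact v.2.2 k j (by show (k:ℕ) < (j:ℕ); omega) hk'.2 h1
          · have : k = j := Fin.ext (by omega)
            rw [this] at hk'
            rw [hk'.2] at h1
            exact absurd h1 (by decide)
        · exfalso
          have := hle j
          rw [hu j, h2] at this
          split_ifs at this <;> exact absurd this (by decide)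
    · -- u = 0^a 2 0^*, cover is bottom
      set c : Triword n := ⟨fun _ => 0, bot_tri⟩ with hcdef
      have hcu : c < u := by
        refine lt_of_le_of_ne (fun j => Fin.zero_le _) ?_
        intro he
        have := congrFun (congrArg Subtype.val he) ⟨a, han⟩
        rw [hu ⟨a, han⟩, if_pos rfl] at this
        exact absurd this (show ¬(0 : Fin 3) = 2 by decide)
      refine unique_cover_of u c hcu ?_
      intro v hv
      have hle : ∀ j, v.1 j ≤ u.1 j := hv.le
      have hall : ∀ j, v.1 j = 0 := by
        intro j
        rcases Nat.decEq (j : ℕ) a with hja | hja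
        · -- j ≠ a
          have := hle j
          rw [hu j, if_neg hja] at this
          exact fin3_le0 _ this
        · rcases fin3_cases (v.1 j) with h0 | h1 | h2
          · exact h0
          · exfalso
            have h0n : (0 : ℕ) < n := by omega
            have hne0 : ¬((⟨0, h0n⟩ : Fin n) : ℕ) = a := by
              show ¬((0 : ℕ) = a); omega
            have h00 : v.1 ⟨0, h0n⟩ = 0 := by
              have h' := hle ⟨0, h0n⟩
              rw [hu ⟨0, h0n⟩, if_neg hne0] at h'
              exact fin3_le0 _ h'
            exact v.2.2 ⟨0, h0n⟩ j (by show (0:ℕ) < (j:ℕ); omega) h00 h1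
          · exfalso
            apply hv.ne
            apply Subtype.ext; funext j'
            rcases Nat.decEq (j' : ℕ) a with hja' | hja'
            · have := hle j'
              rw [hu j', if_neg hja'] at this
              rw [fin3_le0 _ this, hu j', if_neg hja']
            · rw [show j' = j from Fin.ext (by omega), h2, hu j,
                if_pos (by omega)]
      intro j
      rw [hall j]

-- the explicit parametrization
lemma W1_eq_one_iff (a : ℕ) (i : Fin n) : W1 n a i = 1 ↔ (i : ℕ) < a := by
  unfold W1
  split_ifs with h
  · exact iff_of_true rfl h
  · exact iff_of_false (by decide) h

lemma W2_eq_two_iff (a : ℕ) (i : Fin n) : W2 n a i = 2 ↔ (i : ℕ) = a := by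
  unfold W2
  split_ifs with h
  · exact iff_of_true rfl h
  · exact iff_of_false (by decide) h

lemma W2_ne_one (a : ℕ) (i : Fin n) : W2 n a i ≠ 1 := by
  unfold W2; split_ifs <;> decide

lemma W1_inj {a b : ℕ} (ha1 : 1 ≤ a) (ha : a ≤ n) (hb1 : 1 ≤ b) (hb : b ≤ n)
    (h : W1 n a = W1 n b) : a = b := by
  by_contra hne
  rcases Nat.lt_or_ge a b with hlt | hlt
  · have hab : a < n := by omega
    have h1 : W1 n b ⟨a, hab⟩ = 1 := (W1_eq_one_iff b _).mpr hlt
    have h2 : ((⟨a, hab⟩ : Fin n) : ℕ) < a :=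
      (W1_eq_one_iff a ⟨a, hab⟩).mp (by rw [h]; exact h1)
    have h3 : ((⟨a, hab⟩ : Fin n) : ℕ) = a := rfl
    omega
  · have hba : b < a := by omega
    have hbn : b < n := by omega
    have h1 : W1 n a ⟨b, hbn⟩ = 1 := (W1_eq_one_iff a _).mpr hba
    have h2 : ((⟨b, hbn⟩ : Fin n) : ℕ) < b :=
      (W1_eq_one_iff b ⟨b, hbn⟩).mp (by rw [← h]; exact h1)
    have h3 : ((⟨b, hbn⟩ : Fin n) : ℕ) = b := rfl
    omega

lemma W2_inj {a b : ℕ} (ha : a < n) (hb : b < n) (h : W2 n a = W2 n b) :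
    a = b := by
  have h1 : W2 n a ⟨a, ha⟩ = 2 := (W2_eq_two_iff a _).mpr rfl
  exact (W2_eq_two_iff b ⟨a, ha⟩).mp (by rw [← h]; exact h1)

lemma W1_ne_W2 {a b : ℕ} (ha1 : 1 ≤ a) (hn : 1 ≤ n) :
    W1 n a ≠ W2 n b := by
  intro h
  exact W2_ne_one b ⟨0, hn⟩ (by rw [← h]; exact (W1_eq_one_iff a _).mpr ha1)

end HLaux

open HLaux in
theorem join_irreducibles (n : ℕ) (hn : 1 ≤ n) :
    Nat.card {u : Triword n // ∃! v : Triword n, v ⋖ u} = 2 * n - 1 ∧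
    ∀ u : Triword n, (∃! v : Triword n, v ⋖ u) ↔
      ((∃ a : ℕ, 1 ≤ a ∧ a ≤ n ∧
          ∀ i : Fin n, u.1 i = if (i : ℕ) < a then 1 else 0) ∨
       (∃ a : ℕ, 1 ≤ a ∧ a < n ∧
          ∀ i : Fin n, u.1 i = if (i : ℕ) = a then 2 else 0)) := by
  refine ⟨?_, fun u => char hn u⟩
  -- cardinality via an explicit bijection
  classical
  let f : Fin n ⊕ Fin (n - 1) → {u : Triword n // ∃! v : Triword n, v ⋖ u} :=
    fun x => match x with
      | Sum.inl k => ⟨⟨W1 n ((k : ℕ) + 1), W1_tri _⟩,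
          (char hn _).mpr (Or.inl ⟨(k : ℕ) + 1, by omega,
            by have := k.isLt; omega, fun i => rfl⟩)⟩
      | Sum.inr k => ⟨⟨W2 n ((k : ℕ) + 1), W2_tri _ (by omega)⟩,
          (char hn _).mpr (Or.inr ⟨(k : ℕ) + 1, by omega,
            by have := k.isLt; omega, fun i => rfl⟩)⟩
  have hbij : Function.Bijective f := by
    constructor
    · rintro (k | k) (k' | k') h
      · have h' : W1 n ((k : ℕ) + 1) = W1 n ((k' : ℕ) + 1) :=
          congrArg (fun z => z.1.1) h
        have := W1_inj (n := n) (by omega) (by have := k.isLt; omega)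
          (by omega) (by have := k'.isLt; omega) h'
        exact congrArg Sum.inl (Fin.ext (by omega))
      · exact absurd (congrArg (fun z => z.1.1) h)
          (W1_ne_W2 (by omega) hn)
      · exact absurd (congrArg (fun z => z.1.1) h).symm
          (W1_ne_W2 (by omega) hn)
      · have h' : W2 n ((k : ℕ) + 1) = W2 n ((k' : ℕ) + 1) :=
          congrArg (fun z => z.1.1) h
        have := W2_inj (n := n) (by have := k.isLt; omega)
          (by have := k'.isLt; omega) h'
        exact congrArg Sum.inr (Fin.ext (by omega))
    · rintro ⟨u, hu⟩
      rcases (char hn u).mp hu with ⟨a, ha1, han, hval⟩ | ⟨a, ha1, han, hval⟩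
      · refine ⟨Sum.inl ⟨a - 1, by omega⟩, ?_⟩
        apply Subtype.ext; apply Subtype.ext
        funext i
        show W1 n ((a - 1) + 1) i = u.1 i
        rw [hval i]
        unfold W1
        congr 1
        simp only [eq_iff_iff]
        omega
      · refine ⟨Sum.inr ⟨a - 1, by omega⟩, ?_⟩
        apply Subtype.ext; apply Subtype.ext
        funext i
        show W2 n ((a - 1) + 1) i = u.1 i
        rw [hval i]
        unfold W2
        congr 1
        simp only [eq_iff_iff]
        omega
  rw [← Nat.card_eq_of_bijective f hbij, Nat.card_sum]
  simp only [Nat.card_eq_fintype_card, Fintype.card_fin]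
  omega
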